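/- arXiv:1112.4897 — 8 statements merged into one kernel-verified Lean document; each statement's English description precedes it below -/
import Mathlib

section
/- Let L be a regular language with syntactic monoid M_L, and let w be a word with |w| ≥ |M_L|². Then w can be factorized as w = αβγ with β nonempty, such that α is syntactically congruent to αβ (with respect to L) and γ is syntactically congruent to βγ. -/
/-- Syntactic congruence of a language `L` over alphabet `V`. -/
def SynCong {V : Type*} (L : Set (List V)) (u v : List V) : Prop :=
  ∀ x y : List V, x ++ u ++ y ∈ L ↔ x ++ v ++ y ∈ L

/-- The setoid given by the syntactic congruence. -/
def synSetoid {V : Type*} (L : Set (List V)) : Setoid (List V) :=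
  ⟨SynCong L, ⟨fun _ _ _ => Iff.rfl, fun h x y => (h x y).symm,
    fun h h' x y => (h x y).trans (h' x y)⟩⟩

/-- `wpow x n` is the word `x` repeated `n` times. -/
def wpow {V : Type*} (x : List V) (n : ℕ) : List V := (List.replicate n x).flatten

/-- A word is primitive if it is not a power `x^i` with `i ≥ 2`. -/
def Primitive {V : Type*} (p : List V) : Prop :=
  ∀ (x : List V) (i : ℕ), 2 ≤ i → p ≠ wpow x i

/-- Pixton splicing: rule `(u₁,u₂;v)` splices `x₁u₁y₁` and `x₂u₂y₂` into `x₁vy₂`. -/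
def PSplice {V : Type*} (u₁ u₂ v w₁ w₂ z : List V) : Prop :=
  ∃ x₁ y₁ x₂ y₂ : List V,
    w₁ = x₁ ++ u₁ ++ y₁ ∧ w₂ = x₂ ++ u₂ ++ y₂ ∧ z = x₁ ++ v ++ y₂

/-- A Pixton rule respects `L` if splicing two words of `L` always yields a word of `L`. -/
def PRespects {V : Type*} (L : Set (List V)) (u₁ u₂ v : List V) : Prop :=
  ∀ w₁ w₂ z : List V, w₁ ∈ L → w₂ ∈ L → PSplice u₁ u₂ v w₁ w₂ z → z ∈ L

/-- Classical splicing: rule `(u₁,v₁;u₂,v₂)` splices `x₁u₁v₁y₁` and `x₂u₂v₂y₂`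
into `x₁u₁v₂y₂`. -/
def CSplice {V : Type*} (u₁ v₁ u₂ v₂ w₁ w₂ z : List V) : Prop :=
  ∃ x₁ y₁ x₂ y₂ : List V,
    w₁ = x₁ ++ u₁ ++ v₁ ++ y₁ ∧ w₂ = x₂ ++ u₂ ++ v₂ ++ y₂ ∧ z = x₁ ++ u₁ ++ v₂ ++ y₂

/-- A classical rule respects `L` if splicing two words of `L` always yields a word of `L`. -/
def CRespects {V : Type*} (L : Set (List V)) (u₁ v₁ u₂ v₂ : List V) : Prop :=
  ∀ w₁ w₂ z : List V, w₁ ∈ L → w₂ ∈ L → CSplice u₁ v₁ u₂ v₂ w₁ w₂ z → z ∈ L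

/-- Words generated from axioms `I` by closure under the Pixton splicing rules `R`. -/
inductive PGen {V : Type*} (I : Set (List V))
    (R : Set (List V × List V × List V)) : List V → Prop
  | ax {w : List V} : w ∈ I → PGen I R w
  | splice {r : List V × List V × List V} {w₁ w₂ z : List V} :
      r ∈ R → PGen I R w₁ → PGen I R w₂ →
      PSplice r.1 r.2.1 r.2.2 w₁ w₂ z → PGen I R z

/-! Pigeonhole on the pair (class of the prefix, class of the suffix) over the `|w| + 1` cut
points of `w` gives cuts `i < j` with `w[:i] ∼ w[:j]` and `w[i:] ∼ w[j:]`; take `β = w[i:j]`. -/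

theorem exists_lt_le_map_eq_of_card_le {α : Type*} [Finite α] (f : ℕ → α) {n : ℕ}
    (h : Nat.card α ≤ n) : ∃ i j, i < j ∧ j ≤ n ∧ f i = f j := by
  have : Fintype α := Fintype.ofFinite α
  have hcard : Fintype.card α < Fintype.card (Fin (n + 1)) := by
    rw [Fintype.card_fin, ← Nat.card_eq_fintype_card]; omega
  obtain ⟨i, j, hne, heq⟩ :=
    Fintype.exists_ne_map_eq_of_card_lt (fun i : Fin (n + 1) => f i) hcard
  rcases lt_or_gt_of_ne (Fin.val_ne_of_ne hne) with hlt | hlt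
  · exact ⟨i, j, hlt, Nat.le_of_lt_succ j.isLt, heq⟩
  · exact ⟨j, i, hlt, Nat.le_of_lt_succ i.isLt, heq.symm⟩

theorem List.exists_ne_nil_take_append_eq_take {α : Type*} {w : List α} {i j : ℕ}
    (hij : i < j) (hj : j ≤ w.length) :
    ∃ b, b ≠ [] ∧ w.take i ++ b = w.take j ∧ b ++ w.drop j = w.drop i := by
  obtain ⟨k, rfl⟩ := Nat.exists_eq_add_of_le hij.le
  refine ⟨(w.drop i).take k, ?_, (List.take_add ..).symm, ?_⟩
  · simp only [ne_eq, List.take_eq_nil_iff, List.drop_eq_nil_iff]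
    omega
  · rw [← List.drop_drop, List.take_append_drop]

/-- pumping via the syntactic monoid. -/
theorem stmt0 {V : Type*} (L : Set (List V)) [Finite (Quotient (synSetoid L))]
    (w : List V)
    (hw : (Nat.card (Quotient (synSetoid L))) ^ 2 ≤ w.length) :
    ∃ a b c : List V, w = a ++ b ++ c ∧ b ≠ [] ∧
      SynCong L a (a ++ b) ∧ SynCong L c (b ++ c) := by
  obtain ⟨i, j, hij, hj, hcut⟩ := exists_lt_le_map_eq_of_card_le (n := w.length)
    (fun i => ((⟦w.take i⟧ : Quotient (synSetoid L)), (⟦w.drop i⟧ : Quotient (synSetoid L))))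
    (by rwa [Nat.card_prod, ← sq])
  obtain ⟨b, hb, hprefix, hsuffix⟩ := List.exists_ne_nil_take_append_eq_take hij hj
  refine ⟨w.take i, b, w.drop j, by rw [hprefix, List.take_append_drop], hb, ?_, ?_⟩
  · rw [hprefix]
    exact Quotient.exact (congrArg Prod.fst hcut)
  · rw [hsuffix]
    exact Quotient.exact (congrArg Prod.snd hcut).symm
end

section
/- Let L be a language and let r = (u₁, u₂; v) be a Pixton splicing rule which respects L. If ũ₁ ∼_L u₁, ũ₂ ∼_L u₂, and ṽ ∼_L v, then the rule s = (ũ₁, ũ₂; ṽ) also respects L. -/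
/-- syntactically congruent Pixton rules respect the same language. -/
theorem stmt6 {V : Type*} (L : Set (List V)) (u₁ u₂ v tu₁ tu₂ tv : List V)
    (h : PRespects L u₁ u₂ v)
    (h1 : SynCong L tu₁ u₁) (h2 : SynCong L tu₂ u₂) (h3 : SynCong L tv v) :
    PRespects L tu₁ tu₂ tv := by
  rintro _ _ _ hw₁ hw₂ ⟨x₁, y₁, x₂, y₂, rfl, rfl, rfl⟩
  exact (h3 x₁ y₂).mpr <|
    h _ _ _ ((h1 x₁ y₁).mp hw₁) ((h2 x₂ y₂).mp hw₂) ⟨x₁, y₁, x₂, y₂, rfl, rfl, rfl⟩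
end

section
/- Let L be a regular language, let r = (u₁, u₂; v) be a Pixton splicing rule which respects L, and let w₁ = x₁u₁y₁ ∈ L, w₂ = x₂u₂y₂ ∈ L. Then there exist words ũ₁ ∈ [u₁y₁]_L and ũ₂ ∈ [x₂u₂]_L with |ũ₁|, |ũ₂| < |M_L|, such that the rule s = (ũ₁, ũ₂; v) respects L, x₁ũ₁ ∈ L, ũ₂y₂ ∈ L, and (x₁ũ₁, ũ₂y₂) ⊢_s x₁vy₂. -/
/-! Two words in the same syntactic class are interchangeable in every context, so the
rule (u₁, u₂; v) can be replaced by (ũ₁, ũ₂; v) whenever ũ₁ ~ u₁y₁ and ũ₂ ~ x₂u₂: a splice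
of x ũ₁ y and x' ũ₂ y' with the new rule is a splice of x u₁ (y₁ y) and (x' x₂) u₂ y' with the
old one. Short representatives exist by pigeonhole: among the n + 1 prefixes of a word of
length n ≥ |M_L| two are congruent, and cutting out the factor between them keeps the class. -/

theorem SynCong.append_right {V : Type*} {L : Set (List V)} {a b : List V}
    (h : SynCong L a b) (s : List V) : SynCong L (a ++ s) (b ++ s) := fun x y => by
  simpa only [List.append_assoc] using h x (s ++ y)

theorem exists_synCong_length_lt_of_card_le {V : Type*} (L : Set (List V))
    [Finite (Quotient (synSetoid L))] {w : List V}
    (hw : Nat.card (Quotient (synSetoid L)) ≤ w.length) :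
    ∃ a : List V, SynCong L a w ∧ a.length < w.length := by
  set n := Nat.card (Quotient (synSetoid L))
  let prefixClass : Fin (n + 1) → Quotient (synSetoid L) := fun i => ⟦w.take i⟧
  have hnot_inj : ¬ Function.Injective prefixClass := fun hinj => by
    simpa [n] using Nat.card_le_card_of_injective prefixClass hinj
  obtain ⟨i, j, hij, hlt⟩ : ∃ i j : Fin (n + 1), prefixClass i = prefixClass j ∧ i < j := by
    obtain ⟨i, j, heq, hne⟩ := Function.not_injective_iff.mp hnot_inj
    rcases lt_or_gt_of_ne hne with h | h
    exacts [⟨i, j, heq, h⟩, ⟨j, i, heq.symm, h⟩]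
  have hcut : SynCong L (w.take i ++ w.drop j) w := by
    have hprefix : SynCong L (w.take i) (w.take j) := Quotient.exact hij
    simpa only [List.take_append_drop] using hprefix.append_right (w.drop j)
  refine ⟨_, hcut, ?_⟩
  simp only [List.length_append, List.length_take, List.length_drop]
  omega

theorem exists_synCong_length_lt_card {V : Type*} (L : Set (List V))
    [Finite (Quotient (synSetoid L))] (w : List V) :
    ∃ a : List V, SynCong L a w ∧ a.length < Nat.card (Quotient (synSetoid L)) := by
  induction hk : w.length using Nat.strong_induction_on generalizing w with
  | _ k ih =>
    by_cases hw : w.length < Nat.card (Quotient (synSetoid L))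
    · exact ⟨w, fun _ _ => Iff.rfl, hw⟩
    obtain ⟨b, hbw, hb⟩ := exists_synCong_length_lt_of_card_le L (not_lt.mp hw)
    obtain ⟨a, hab, ha⟩ := ih b.length (hk ▸ hb) b rfl
    exact ⟨a, fun x y => (hab x y).trans (hbw x y), ha⟩

theorem PRespects.of_synCong {V : Type*} {L : Set (List V)} {u₁ u₂ v a b x₂ y₁ : List V}
    (hr : PRespects L u₁ u₂ v) (ha : SynCong L a (u₁ ++ y₁)) (hb : SynCong L b (x₂ ++ u₂)) :
    PRespects L a b v := by
  rintro _ _ z hw₁ hw₂ ⟨p₁, q₁, p₂, q₂, rfl, rfl, rfl⟩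
  have hw₁' : p₁ ++ u₁ ++ (y₁ ++ q₁) ∈ L := by
    simpa only [List.append_assoc] using (ha p₁ q₁).mp hw₁
  have hw₂' : p₂ ++ x₂ ++ u₂ ++ q₂ ∈ L := by
    simpa only [List.append_assoc] using (hb p₂ q₂).mp hw₂
  exact hr _ _ _ hw₁' hw₂' ⟨p₁, y₁ ++ q₁, p₂ ++ x₂, q₂, rfl, rfl, rfl⟩

theorem PSplice.prefix_suffix {V : Type*} (a b v x y : List V) :
    PSplice a b v (x ++ a) (b ++ y) (x ++ v ++ y) :=
  ⟨x, [], [], y, by simp, by simp, rfl⟩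

/-- shortening the words used in a Pixton splicing. -/
theorem stmt7 {V : Type*} (L : Set (List V)) [Finite (Quotient (synSetoid L))]
    (u₁ u₂ v x₁ y₁ x₂ y₂ : List V)
    (hr : PRespects L u₁ u₂ v)
    (h1 : x₁ ++ u₁ ++ y₁ ∈ L) (h2 : x₂ ++ u₂ ++ y₂ ∈ L) :
    ∃ a b : List V,
      SynCong L a (u₁ ++ y₁) ∧ SynCong L b (x₂ ++ u₂) ∧
      a.length < Nat.card (Quotient (synSetoid L)) ∧
      b.length < Nat.card (Quotient (synSetoid L)) ∧
      PRespects L a b v ∧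
      x₁ ++ a ∈ L ∧ b ++ y₂ ∈ L ∧
      PSplice a b v (x₁ ++ a) (b ++ y₂) (x₁ ++ v ++ y₂) := by
  obtain ⟨a, ha, hal⟩ := exists_synCong_length_lt_card L (u₁ ++ y₁)
  obtain ⟨b, hb, hbl⟩ := exists_synCong_length_lt_card L (x₂ ++ u₂)
  have hx₁a : x₁ ++ a ∈ L := by
    simpa using (ha x₁ []).mpr (by simpa only [List.append_assoc, List.append_nil] using h1)
  have hby₂ : b ++ y₂ ∈ L := by
    simpa using (hb [] y₂).mpr h2
  exact ⟨a, b, ha, hb, hal, hbl, hr.of_synCong ha hb, hx₁a, hby₂,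
    PSplice.prefix_suffix a b v x₁ y₂⟩
end

section
/- Let L be a language, let wᵢ = xᵢuᵢyᵢ ∈ L for i = 1, 2, 3, and let r₁ = (u₁, u₂; v₁) and r₂ = (u₃, u₄; v₂) be Pixton splicing rules which respect L. Suppose (w₁, w₂) ⊢_{r₁} x₁v₁y₂ = w₄ = x₄u₄y₄ and (w₃, w₄) ⊢_{r₂} x₃v₂y₄ = z, where y₄ is a suffix of y₂. Then there exists a word ũ₂ such that the rule s = (u₃, ũ₂; v₂) respects L and (w₃, w₂) ⊢_s z. -/
theorem PSplice.append {V : Type*} {u₁ u₂ v : List V} (x₁ y₁ x₂ y₂ : List V) :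
    PSplice u₁ u₂ v (x₁ ++ u₁ ++ y₁) (x₂ ++ u₂ ++ y₂) (x₁ ++ v ++ y₂) :=
  ⟨x₁, y₁, x₂, y₂, rfl, rfl, rfl⟩

theorem PRespects.append_mem {V : Type*} {L : Set (List V)} {u₁ u₂ v x₁ y₁ x₂ y₂ : List V}
    (h : PRespects L u₁ u₂ v) (h₁ : x₁ ++ u₁ ++ y₁ ∈ L) (h₂ : x₂ ++ u₂ ++ y₂ ∈ L) :
    x₁ ++ v ++ y₂ ∈ L :=
  h _ _ _ h₁ h₂ (PSplice.append x₁ y₁ x₂ y₂)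

/-- Splicing `x u₃ y` with `x' (u₂ ++ t) y'` factors through `x₄ u₄ y'`: first splice
`x₁ u₁ y₁` with `x' u₂ (t ++ y')` by `hr₁`, then `x u₃ y` with the result by `hr₂`. -/
theorem PRespects.comp {V : Type*} {L : Set (List V)} {u₁ u₂ u₃ u₄ v₁ v₂ x₁ y₁ x₄ t : List V}
    (hr₁ : PRespects L u₁ u₂ v₁) (hr₂ : PRespects L u₃ u₄ v₂) (h₁ : x₁ ++ u₁ ++ y₁ ∈ L)
    (ht : x₁ ++ v₁ ++ t = x₄ ++ u₄) : PRespects L u₃ (u₂ ++ t) v₂ := by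
  rintro _ _ _ hw hw' ⟨x, y, x', y', rfl, rfl, rfl⟩
  have h₄ : x₄ ++ u₄ ++ y' ∈ L := by
    rw [← ht, List.append_assoc _ t]
    exact hr₁.append_mem h₁ (by simpa only [List.append_assoc] using hw')
  exact hr₂.append_mem hw h₄

theorem stmt9_general {V : Type*} (L : Set (List V))
    (u₁ u₂ u₃ u₄ v₁ v₂ x₁ y₁ x₂ y₂ x₃ y₃ x₄ y₄ : List V)
    (h1 : x₁ ++ u₁ ++ y₁ ∈ L)
    (hr1 : PRespects L u₁ u₂ v₁) (hr2 : PRespects L u₃ u₄ v₂)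
    (hw4 : x₁ ++ v₁ ++ y₂ = x₄ ++ u₄ ++ y₄)
    (hsuf : y₄ <:+ y₂) :
    ∃ b : List V, PRespects L u₃ b v₂ ∧
      PSplice u₃ b v₂ (x₃ ++ u₃ ++ y₃) (x₂ ++ u₂ ++ y₂) (x₃ ++ v₂ ++ y₄) := by
  obtain ⟨t, rfl⟩ := hsuf
  have ht : x₁ ++ v₁ ++ t = x₄ ++ u₄ :=
    List.append_cancel_right (by simpa only [List.append_assoc] using hw4)
  refine ⟨u₂ ++ t, hr1.comp hr2 h1 ht, ?_⟩
  simpa only [List.append_assoc] using PSplice.append (u₂ := u₂ ++ t) (v := v₂) x₃ y₃ x₂ y₄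

/-- combining two successive Pixton splicings into one. -/
theorem stmt9 {V : Type*} (L : Set (List V))
    (u₁ u₂ u₃ u₄ v₁ v₂ x₁ y₁ x₂ y₂ x₃ y₃ x₄ y₄ : List V)
    (h1 : x₁ ++ u₁ ++ y₁ ∈ L) (h2 : x₂ ++ u₂ ++ y₂ ∈ L) (h3 : x₃ ++ u₃ ++ y₃ ∈ L)
    (hr1 : PRespects L u₁ u₂ v₁) (hr2 : PRespects L u₃ u₄ v₂)
    (hw4 : x₁ ++ v₁ ++ y₂ = x₄ ++ u₄ ++ y₄)
    (hsuf : y₄ <:+ y₂) :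
    ∃ b : List V, PRespects L u₃ b v₂ ∧
      PSplice u₃ b v₂ (x₃ ++ u₃ ++ y₃) (x₂ ++ u₂ ++ y₂) (x₃ ++ v₂ ++ y₄) :=
  stmt9_general L u₁ u₂ u₃ u₄ v₁ v₂ x₁ y₁ x₂ y₂ x₃ y₃ x₄ y₄ h1 hr1 hr2 hw4 hsuf
end

section
/- Let L be a language and r = (u₁, v₁; u₂, v₂) a classical splicing rule which respects L. If ũ₁ ∼_L u₁, ṽ₁ ∼_L v₁, ũ₂ ∼_L u₂, ṽ₂ ∼_L v₂, then the rule s = (ũ₁, ṽ₁; ũ₂, ṽ₂) also respects L. -/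
theorem SynCong.append {V : Type*} {L : Set (List V)} {u u' v v' : List V}
    (hu : SynCong L u u') (hv : SynCong L v v') : SynCong L (u ++ v) (u' ++ v') := fun x y => by
  have hu' := hu x (v ++ y)
  have hv' := hv (x ++ u') y
  simp only [List.append_assoc] at hu' hv' ⊢
  exact hu'.trans hv'

theorem SynCong.append_mem_iff {V : Type*} {L : Set (List V)} {u u' v v' : List V}
    (hu : SynCong L u u') (hv : SynCong L v v') (x y : List V) :
    x ++ u ++ v ++ y ∈ L ↔ x ++ u' ++ v' ++ y ∈ L := by
  simpa only [List.append_assoc] using hu.append hv x y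

/-- syntactically congruent classical rules respect the same language. -/
theorem stmt12 {V : Type*} (L : Set (List V)) (u₁ v₁ u₂ v₂ tu₁ tv₁ tu₂ tv₂ : List V)
    (h : CRespects L u₁ v₁ u₂ v₂)
    (h1 : SynCong L tu₁ u₁) (h2 : SynCong L tv₁ v₁)
    (h3 : SynCong L tu₂ u₂) (h4 : SynCong L tv₂ v₂) :
    CRespects L tu₁ tv₁ tu₂ tv₂ := by
  rintro _ _ _ hw₁ hw₂ ⟨x₁, y₁, x₂, y₂, rfl, rfl, rfl⟩
  have hw₁' := (h1.append_mem_iff h2 x₁ y₁).mp hw₁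
  have hw₂' := (h3.append_mem_iff h4 x₂ y₂).mp hw₂
  exact (h1.append_mem_iff h4 x₁ y₂).mpr (h _ _ _ hw₁' hw₂' ⟨x₁, y₁, x₂, y₂, rfl, rfl, rfl⟩)
end

section
/- Let L be a regular language, r = (u₁, v₁; u₂, v₂) a classical splicing rule respecting L, and w₁ = x₁u₁v₁y₁ ∈ L, w₂ = x₂u₂v₂y₂ ∈ L. Then there exist words ṽ₁ ∈ [v₁y₁]_L and ũ₂ ∈ [x₂u₂]_L with |ṽ₁|, |ũ₂| < |M_L| such that the rule s = (u₁, ṽ₁; ũ₂, v₂) respects L, x₁u₁ṽ₁ ∈ L, ũ₂v₂y₂ ∈ L, and (x₁u₁ṽ₁, ũ₂v₂y₂) ⊢_s x₁u₁v₂y₂. -/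
/-!
Replacing a factor of a word by a syntactically congruent one does not affect membership in
`L`, so the rule `(u₁, v₁y₁; x₂u₂, v₂)`, which respects `L` because `r` does, still respects `L`
after `v₁y₁` and `x₂u₂` are swapped for congruent words. Short congruent words exist by
pigeonhole: among the `|M_L| + 1` shortest prefixes of a word of length at least `|M_L|`, two are
congruent, and cutting out the factor between them gives a shorter congruent word.
-/

section

variable {V : Type*} {L : Set (List V)}

namespace SynCong

theorem refl (w : List V) : SynCong L w w := fun _ _ => Iff.rfl

theorem symm {u v : List V} (h : SynCong L u v) : SynCong L v u := fun x y => (h x y).symm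

theorem trans {u v w : List V} (h : SynCong L u v) (h' : SynCong L v w) : SynCong L u w :=
  fun x y => (h x y).trans (h' x y)

theorem mem_iff {u v : List V} (h : SynCong L u v) (x y : List V) :
    x ++ (u ++ y) ∈ L ↔ x ++ (v ++ y) ∈ L := by
  simpa only [List.append_assoc] using h x y

theorem append_right_s13 {u v : List V} (h : SynCong L u v) (z : List V) :
    SynCong L (u ++ z) (v ++ z) := fun x y => by
  simpa only [List.append_assoc] using h.mem_iff x (z ++ y)

end SynCong

theorem exists_synCong_take_of_card_le [Finite (Quotient (synSetoid L))] {w : List V}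
    (hw : Nat.card (Quotient (synSetoid L)) ≤ w.length) :
    ∃ i j, i < j ∧ j ≤ w.length ∧ SynCong L (w.take i) (w.take j) := by
  let prefixClass (i : Fin (w.length + 1)) := Quotient.mk (synSetoid L) (w.take i)
  obtain ⟨i, j, heq, hne⟩ := Function.not_injective_iff.1 fun hinj => by
    have := Nat.card_le_card_of_injective prefixClass hinj
    rw [Nat.card_fin] at this
    omega
  have hc : SynCong L (w.take i) (w.take j) := Quotient.exact heq
  rcases lt_or_gt_of_ne (Fin.val_injective.ne hne) with hij | hij
  · exact ⟨i, j, hij, Nat.lt_succ_iff.1 j.2, hc⟩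
  · exact ⟨j, i, hij, Nat.lt_succ_iff.1 i.2, hc.symm⟩

variable (L) in
theorem exists_synCong_length_lt [Finite (Quotient (synSetoid L))] (w : List V) :
    ∃ a, SynCong L a w ∧ a.length < Nat.card (Quotient (synSetoid L)) := by
  by_cases hw : w.length < Nat.card (Quotient (synSetoid L))
  · exact ⟨w, .refl w, hw⟩
  obtain ⟨i, j, hij, hj, hc⟩ := exists_synCong_take_of_card_le (not_lt.1 hw)
  obtain ⟨a, ha, hal⟩ := exists_synCong_length_lt (w.take i ++ w.drop j)
  refine ⟨a, ha.trans ?_, hal⟩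
  simpa only [List.take_append_drop] using hc.append_right_s13 (w.drop j)
termination_by w.length
decreasing_by simp only [List.length_append, List.length_take, List.length_drop]; omega

namespace CRespects

variable {u₁ v₁ u₂ v₂ : List V}

theorem append_context (hr : CRespects L u₁ v₁ u₂ v₂) (x y : List V) :
    CRespects L u₁ (v₁ ++ y) (x ++ u₂) v₂ := by
  rintro _ _ _ hw₁ hw₂ ⟨x₁, y₁, x₂, y₂, rfl, rfl, rfl⟩
  exact hr _ _ _ hw₁ hw₂ ⟨x₁, y ++ y₁, x₂ ++ x, y₂, by simp, by simp, rfl⟩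

theorem of_synCong (hr : CRespects L u₁ v₁ u₂ v₂) {a b : List V}
    (ha : SynCong L a v₁) (hb : SynCong L b u₂) : CRespects L u₁ a b v₂ := by
  rintro _ _ _ hw₁ hw₂ ⟨x₁, y₁, x₂, y₂, rfl, rfl, rfl⟩
  refine hr _ _ _ ((ha (x₁ ++ u₁) y₁).1 hw₁) ?_ ⟨x₁, y₁, x₂, y₂, rfl, rfl, rfl⟩
  simp only [List.append_assoc] at hw₂ ⊢
  exact (hb.mem_iff x₂ (v₂ ++ y₂)).1 hw₂

end CRespects

end

/-- shortening the words used in a classical splicing. -/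
theorem stmt13 {V : Type*} (L : Set (List V)) [Finite (Quotient (synSetoid L))]
    (u₁ v₁ u₂ v₂ x₁ y₁ x₂ y₂ : List V)
    (hr : CRespects L u₁ v₁ u₂ v₂)
    (h1 : x₁ ++ u₁ ++ v₁ ++ y₁ ∈ L) (h2 : x₂ ++ u₂ ++ v₂ ++ y₂ ∈ L) :
    ∃ a b : List V,
      SynCong L a (v₁ ++ y₁) ∧ SynCong L b (x₂ ++ u₂) ∧
      a.length < Nat.card (Quotient (synSetoid L)) ∧
      b.length < Nat.card (Quotient (synSetoid L)) ∧
      CRespects L u₁ a b v₂ ∧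
      x₁ ++ u₁ ++ a ∈ L ∧ b ++ v₂ ++ y₂ ∈ L ∧
      CSplice u₁ a b v₂ (x₁ ++ u₁ ++ a) (b ++ v₂ ++ y₂)
        (x₁ ++ u₁ ++ v₂ ++ y₂) := by
  obtain ⟨a, ha, hal⟩ := exists_synCong_length_lt L (v₁ ++ y₁)
  obtain ⟨b, hb, hbl⟩ := exists_synCong_length_lt L (x₂ ++ u₂)
  have hmem₁ : x₁ ++ u₁ ++ a ∈ L := by
    simpa using (ha.mem_iff (x₁ ++ u₁) []).2 (by simpa using h1)
  have hmem₂ : b ++ v₂ ++ y₂ ∈ L := by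
    simpa using (hb.mem_iff [] (v₂ ++ y₂)).2 (by simpa using h2)
  exact ⟨a, b, ha, hb, hal, hbl, (hr.append_context x₂ y₁).of_synCong ha hb, hmem₁, hmem₂,
    x₁, [], [], y₂, by simp, by simp, rfl⟩
end

section
/- Let L be a language, wᵢ = xᵢuᵢvᵢyᵢ ∈ L for i = 1, 2, 3, and r₁ = (u₁, v₁; u₂, v₂), r₂ = (u₃, v₃; u₄, v₄) be classical splicing rules respecting L. Suppose (w₁, w₂) ⊢_{r₁} x₁u₁v₂y₂ = w₄ = x₄u₄v₄y₄ and (w₃, w₄) ⊢_{r₂} x₃u₃v₄y₄ = z, where v₄y₄ is a suffix of v₂y₂. Then there exist words δ and ṽ₄ such that the rule s = (u₃, v₃; u₂δ, ṽ₄) respects L and (w₃, w₂) ⊢_s z. -/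
/-! Write `v₂y₂ = δv₄y₄`, so that `x₁u₁δ = x₄u₄`. Any word `d u₂ δ b e` in which `v₂` is a prefix
of `δb` and `v₄` a prefix of `b` can be spliced first with `w₁` by `r₁`, landing in a word
`x₄u₄v₄e'` of `L`, and then with any `a u₃ v₃ c` by `r₂`; the result is `a u₃ b e`. Hence
`(u₃, v₃; u₂δ, b)` respects `L`, and `w₂ = x₂u₂δby` for a suitable `b`. -/

section Splicing

variable {V : Type*}

theorem List.exists_prefix_extension_of_append_eq {δ v₂ y₂ v₄ y₄ : List V}
    (h : δ ++ v₄ ++ y₄ = v₂ ++ y₂) :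
    ∃ b y : List V, v₂ <+: δ ++ b ∧ v₄ <+: b ∧ b ++ y = v₄ ++ y₄ := by
  -- `b` is the longer of `v₄` and the part of `v₂` after `δ`
  have hv₂ : v₂ <+: v₂ ++ y₂ := List.prefix_append _ _
  have hδv₄ : δ ++ v₄ <+: v₂ ++ y₂ := h ▸ List.prefix_append _ _
  rcases List.prefix_or_prefix_of_prefix hv₂ hδv₄ with hle | ⟨s, hs⟩
  · exact ⟨v₄, y₄, by simpa using hle, List.prefix_refl _, rfl⟩
  · have hy : δ ++ v₄ ++ (s ++ y₂) = δ ++ v₄ ++ y₄ := by rw [h, ← hs]; simp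
    exact ⟨v₄ ++ s, y₂, by simp [← hs], List.prefix_append _ _, by
      simpa using List.append_cancel_left hy⟩

theorem CRespects.of_consecutive_splices {L : Set (List V)} {u₁ v₁ u₂ v₂ u₃ v₃ u₄ v₄ x₁ y₁ x₄ δ b : List V}
    (hr1 : CRespects L u₁ v₁ u₂ v₂) (hr2 : CRespects L u₃ v₃ u₄ v₄)
    (h1 : x₁ ++ u₁ ++ v₁ ++ y₁ ∈ L) (hδ : x₁ ++ u₁ ++ δ = x₄ ++ u₄)
    (hv₂ : v₂ <+: δ ++ b) (hv₄ : v₄ <+: b) :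
    CRespects L u₃ v₃ (u₂ ++ δ) b := by
  obtain ⟨t, ht⟩ := hv₂
  obtain ⟨s, rfl⟩ := hv₄
  rintro w₁ w₂ z hw₁ hw₂ ⟨a, c, d, e, rfl, rfl, rfl⟩
  have hx₁ : x₁ ++ u₁ ++ v₂ ++ (t ++ e) ∈ L :=
    hr1 _ _ _ h1 hw₂ ⟨x₁, y₁, d, t ++ e, rfl, by simp [← ht], rfl⟩
  have hx₄ : x₄ ++ u₄ ++ v₄ ++ (s ++ e) ∈ L := by
    convert hx₁ using 1
    rw [← hδ, List.append_assoc _ v₂, ← List.append_assoc v₂, ht]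
    simp
  simpa using hr2 _ _ _ hw₁ hx₄ ⟨a, c, x₄, s ++ e, rfl, rfl, rfl⟩

end Splicing

theorem stmt14_general {V : Type*} (L : Set (List V))
    (u₁ v₁ u₂ v₂ u₃ v₃ u₄ v₄ x₁ y₁ x₂ y₂ x₃ y₃ x₄ y₄ : List V)
    (h1 : x₁ ++ u₁ ++ v₁ ++ y₁ ∈ L)
    (hr1 : CRespects L u₁ v₁ u₂ v₂) (hr2 : CRespects L u₃ v₃ u₄ v₄)
    (hw4 : x₁ ++ u₁ ++ v₂ ++ y₂ = x₄ ++ u₄ ++ v₄ ++ y₄)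
    (hsuf : (v₄ ++ y₄) <:+ (v₂ ++ y₂)) :
    ∃ δ b : List V, CRespects L u₃ v₃ (u₂ ++ δ) b ∧
      CSplice u₃ v₃ (u₂ ++ δ) b (x₃ ++ u₃ ++ v₃ ++ y₃) (x₂ ++ u₂ ++ v₂ ++ y₂)
        (x₃ ++ u₃ ++ v₄ ++ y₄) := by
  obtain ⟨δ, hδ⟩ := hsuf
  have hu₄ : x₁ ++ u₁ ++ δ = x₄ ++ u₄ := by
    apply List.append_cancel_right (bs := v₄ ++ y₄)
    simpa [← hδ] using hw4
  obtain ⟨b, y, hv₂, hv₄, hby⟩ :=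
    List.exists_prefix_extension_of_append_eq (by simpa using hδ)
  refine ⟨δ, b, hr1.of_consecutive_splices hr2 h1 hu₄ hv₂ hv₄, x₃, y₃, x₂, y, rfl, ?_, ?_⟩
  · simp [← hδ, ← hby]
  · simp [← hby]

/-- combining two successive classical splicings into one. -/
theorem stmt14 {V : Type*} (L : Set (List V))
    (u₁ v₁ u₂ v₂ u₃ v₃ u₄ v₄ x₁ y₁ x₂ y₂ x₃ y₃ x₄ y₄ : List V)
    (h1 : x₁ ++ u₁ ++ v₁ ++ y₁ ∈ L) (h2 : x₂ ++ u₂ ++ v₂ ++ y₂ ∈ L)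
    (h3 : x₃ ++ u₃ ++ v₃ ++ y₃ ∈ L)
    (hr1 : CRespects L u₁ v₁ u₂ v₂) (hr2 : CRespects L u₃ v₃ u₄ v₄)
    (hw4 : x₁ ++ u₁ ++ v₂ ++ y₂ = x₄ ++ u₄ ++ v₄ ++ y₄)
    (hsuf : (v₄ ++ y₄) <:+ (v₂ ++ y₂)) :
    ∃ δ b : List V, CRespects L u₃ v₃ (u₂ ++ δ) b ∧
      CSplice u₃ v₃ (u₂ ++ δ) b (x₃ ++ u₃ ++ v₃ ++ y₃) (x₂ ++ u₂ ++ v₂ ++ y₂)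
        (x₃ ++ u₃ ++ v₄ ++ y₄) :=
  stmt14_general L u₁ v₁ u₂ v₂ u₃ v₃ u₄ v₄ x₁ y₁ x₂ y₂ x₃ y₃ x₄ y₄ h1 hr1 hr2 hw4 hsuf
end

section
/- Let z, α, β, γ be words with β ≠ ε, let ℓ = |αβγ|, and let j > |z| + ℓ be an even number. Consider the procedure that repeatedly finds a factor αβγ in the current word z̃ (starting from z̃ = z) such that neither αβ^{j/2} is a factor of z̃ starting at the same position as this αβγ, nor β^{j/2}γ is a factor of z̃ ending at the same position as this αβγ, and replaces the middle β of that factor by β^j. Then this procedure terminates after finitely many steps. -/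
/-- One step of the pumping algorithm: find a factor `abc` such that neither
`a ++ b^(j/2)` starts at the same position nor `b^(j/2) ++ c` ends at the same
position, and replace the middle `b` by `b^j`. -/
def PumpStep {V : Type*} (a b c : List V) (j : ℕ) (w w' : List V) : Prop :=
  ∃ x y : List V, w = x ++ (a ++ b ++ c) ++ y ∧
    ¬ (∃ t : List V, w = x ++ (a ++ wpow b (j / 2)) ++ t) ∧
    ¬ (∃ s : List V, w = s ++ (wpow b (j / 2) ++ c) ++ y) ∧
    w' = x ++ a ++ wpow b j ++ c ++ y

/-!
Measure a word `w` by its period-`|b|` defects, the positions `t` with `w[t] ≠ w[t + |b|]`.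
Pumping the middle `b` of `a b c` to `b ^ j` inserts a `|b|`-periodic block: defects to the
right of the pump site move right by `(j - 1)|b|`, those to the left stay, and no new ones
appear. The side conditions of a step say that this `b` extends to `b ^ (j/2)` neither to the
right nor to the left, which forces a defect within `(j/2 - 1)|b|` on each side of it; the
step pulls this pair apart. So the number of pairs of defects at distance less than
`(j - 1)|b|` drops at every step.
-/

def shiftAbove (p s d : ℕ) : ℕ := if d ≤ p then d else d + s

section

variable {V : Type*}

lemma wpow_succ (b : List V) (m : ℕ) : wpow b (m + 1) = b ++ wpow b m := by
  simp [wpow, List.replicate_succ]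

lemma wpow_succ' (b : List V) (m : ℕ) : wpow b (m + 1) = wpow b m ++ b := by
  simp [wpow, List.replicate_succ']

lemma wpow_append_self (b : List V) (m : ℕ) : wpow b m ++ b = b ++ wpow b m := by
  rw [← wpow_succ, wpow_succ']

lemma length_wpow (b : List V) (m : ℕ) : (wpow b m).length = m * b.length := by
  induction m with
  | zero => simp [wpow]
  | succ m ih => rw [wpow_succ, List.length_append, ih]; ring

lemma getElem?_wpow {b : List V} {m r : ℕ} (hr : r < m * b.length) :
    (wpow b m)[r]? = b[r % b.length]? := by
  induction m generalizing r with
  | zero => simp at hr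
  | succ m ih =>
    rw [wpow_succ]
    rcases lt_or_ge r b.length with hrb | hrb
    · rw [List.getElem?_append_left hrb, Nat.mod_eq_of_lt hrb]
    · rw [List.getElem?_append_right hrb, ih (by rw [Nat.succ_mul] at hr; omega),
        ← Nat.mod_eq_sub_mod hrb]

lemma eq_take_append_wpow_append_drop {b w : List V} {m q : ℕ}
    (h : ∀ r < m * b.length, w[q + r]? = b[r % b.length]?) :
    w = w.take q ++ wpow b m ++ w.drop (q + m * b.length) := by
  have hblock : (w.drop q).take (m * b.length) = wpow b m := by
    refine List.ext_getElem? fun r => ?_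
    rcases lt_or_ge r (m * b.length) with hr | hr
    · rw [List.getElem?_take_of_lt hr, List.getElem?_drop, h r hr, getElem?_wpow hr]
    · rw [List.getElem?_eq_none (by simp; omega),
        List.getElem?_eq_none (by simp [length_wpow]; omega)]
  conv_lhs =>
    rw [← List.take_append_drop q w, ← List.take_append_drop (m * b.length) (w.drop q)]
  rw [hblock, List.drop_drop, List.append_assoc]

lemma getElem?_add_eq_getElem?_add_mod {w : List V} {n m q r : ℕ}
    (hper : ∀ t, q ≤ t → t + n < q + m * n → w[t]? = w[t + n]?) (hr : r < m * n) :
    w[q + r]? = w[q + r % n]? := by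
  induction r using Nat.strong_induction_on with
  | _ r ih =>
    rcases lt_or_ge r n with hrn | hrn
    · rw [Nat.mod_eq_of_lt hrn]
    · have hn : 0 < n := Nat.pos_of_ne_zero (by rintro rfl; simp at hr)
      have hstep := hper (q + (r - n)) (by omega) (by omega)
      rw [show q + (r - n) + n = q + r by omega] at hstep
      rw [← hstep, ih (r - n) (by omega) (by omega), ← Nat.mod_eq_sub_mod hrn]

open Classical in
/-- A period-`n` defect of `w` at `t` (that is, `w[t]? ≠ w[t + n]?`, which holds in particular
at each of the last `n` positions) is recorded as the cut `t + 1`; the cut `0` marks the left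
end of `w`. -/
noncomputable def periodDefects (n : ℕ) (w : List V) : Finset ℕ :=
  insert 0 (((Finset.range w.length).filter fun t => w[t]? ≠ w[t + n]?).image (· + 1))

lemma mem_periodDefects {n d : ℕ} {w : List V} :
    d ∈ periodDefects n w ↔ d = 0 ∨ ∃ t, w[t]? ≠ w[t + n]? ∧ d = t + 1 := by
  simp only [periodDefects, Finset.mem_insert, Finset.mem_image, Finset.mem_filter,
    Finset.mem_range]
  refine or_congr Iff.rfl
    ⟨fun ⟨t, ⟨_, ht⟩, hd⟩ => ⟨t, ht, hd.symm⟩,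
      fun ⟨t, ht, hd⟩ => ⟨t, ⟨?_, ht⟩, hd.symm⟩⟩
  by_contra hlen
  exact ht (by rw [List.getElem?_eq_none (by omega), List.getElem?_eq_none (by omega)])

lemma getElem?_append_append_length_add {u b v : List V} {i : ℕ} (hi : i < b.length) :
    (u ++ b ++ v)[u.length + i]? = b[i]? := by
  rw [List.append_assoc, List.getElem?_append_right (by omega), Nat.add_sub_cancel_left,
    List.getElem?_append_left hi]

lemma exists_periodDefect_of_not_wpow_prefix {u b v : List V} {m : ℕ}
    (h : ¬ ∃ t, u ++ b ++ v = u ++ wpow b (m + 1) ++ t) :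
    ∃ d ∈ periodDefects b.length (u ++ b ++ v),
      u.length < d ∧ d ≤ u.length + m * b.length := by
  by_contra! hfar
  refine h ⟨(u ++ b ++ v).drop (u.length + (m + 1) * b.length), ?_⟩
  have hper : ∀ t, u.length ≤ t → t + b.length < u.length + (m + 1) * b.length →
      (u ++ b ++ v)[t]? = (u ++ b ++ v)[t + b.length]? := by
    intro t ht₁ ht₂
    by_contra hne
    have := hfar (t + 1) (mem_periodDefects.2 (Or.inr ⟨t, hne, rfl⟩)) (by omega)
    rw [Nat.succ_mul] at ht₂
    omega
  have hb : ∀ r < (m + 1) * b.length, (u ++ b ++ v)[u.length + r]? = b[r % b.length]? := by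
    intro r hr
    have hn : 0 < b.length := Nat.pos_of_ne_zero fun h0 => by simp [h0] at hr
    rw [getElem?_add_eq_getElem?_add_mod hper hr,
      getElem?_append_append_length_add (Nat.mod_lt _ hn)]
  conv_lhs => rw [eq_take_append_wpow_append_drop hb]
  rw [List.append_assoc u b v, List.take_left]

lemma exists_periodDefect_of_not_wpow_suffix {u b v : List V} {m : ℕ}
    (h : ¬ ∃ s, u ++ b ++ v = s ++ wpow b (m + 1) ++ v) :
    ∃ d ∈ periodDefects b.length (u ++ b ++ v),
      d ≤ u.length ∧ u.length < d + m * b.length := by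
  by_contra! hfar
  have hmu : m * b.length ≤ u.length := by
    simpa using hfar 0 (mem_periodDefects.2 (Or.inl rfl)) (Nat.zero_le _)
  set q := u.length - m * b.length
  refine h ⟨(u ++ b ++ v).take q, ?_⟩
  have hper : ∀ t, q ≤ t → t + b.length < q + (m + 1) * b.length →
      (u ++ b ++ v)[t]? = (u ++ b ++ v)[t + b.length]? := by
    intro t ht₁ ht₂
    by_contra hne
    rw [Nat.succ_mul] at ht₂
    have := hfar (t + 1) (mem_periodDefects.2 (Or.inr ⟨t, hne, rfl⟩)) (by omega)
    omega
  have hb : ∀ r < (m + 1) * b.length, (u ++ b ++ v)[q + r]? = b[r % b.length]? := by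
    intro r hr
    have hn : 0 < b.length := Nat.pos_of_ne_zero fun h0 => by simp [h0] at hr
    have hr' : m * b.length + r % b.length < (m + 1) * b.length := by
      rw [Nat.succ_mul]; exact Nat.add_lt_add_left (Nat.mod_lt _ hn) _
    calc (u ++ b ++ v)[q + r]? = (u ++ b ++ v)[q + r % b.length]? :=
          getElem?_add_eq_getElem?_add_mod hper hr
      _ = (u ++ b ++ v)[q + (m * b.length + r % b.length)]? := by
          rw [getElem?_add_eq_getElem?_add_mod hper hr', Nat.mul_add_mod_self_right, Nat.mod_mod]
      _ = (u ++ b ++ v)[u.length + r % b.length]? := by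
          rw [← Nat.add_assoc, Nat.sub_add_cancel hmu]
      _ = b[r % b.length]? := getElem?_append_append_length_add (Nat.mod_lt _ hn)
  conv_lhs => rw [eq_take_append_wpow_append_drop hb]
  rw [show q + (m + 1) * b.length = (u ++ b).length by rw [Nat.succ_mul]; simp; omega,
    List.drop_left]

lemma getElem?_append_wpow_append_of_lt {u b v : List V} {k i : ℕ}
    (hi : i < u.length + b.length) :
    (u ++ wpow b k ++ b ++ v)[i]? = (u ++ b ++ v)[i]? := by
  have hi' : i < (u ++ b).length := by simpa using hi
  rw [List.append_assoc u, wpow_append_self, ← List.append_assoc u, List.append_assoc (u ++ b),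
    List.getElem?_append_left hi', List.getElem?_append_left hi']

lemma getElem?_append_wpow_append_add {u b v : List V} {k i : ℕ} (hi : u.length ≤ i) :
    (u ++ wpow b k ++ b ++ v)[i + k * b.length]? = (u ++ b ++ v)[i]? := by
  rw [List.append_assoc _ b, List.getElem?_append_right (by simp [length_wpow]; omega),
    List.append_assoc u, List.getElem?_append_right hi, List.length_append, length_wpow,
    Nat.add_sub_add_right]

lemma getElem?_append_wpow_append_periodic {u b v : List V} {k t : ℕ} (ht₁ : u.length ≤ t)
    (ht₂ : t < u.length + k * b.length) :
    (u ++ wpow b k ++ b ++ v)[t]? = (u ++ wpow b k ++ b ++ v)[t + b.length]? := by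
  have hblock : ∀ r < (k + 1) * b.length,
      (u ++ wpow b k ++ b ++ v)[u.length + r]? = b[r % b.length]? := fun r hr => by
    rw [List.append_assoc u (wpow b k) b, ← wpow_succ', List.append_assoc,
      List.getElem?_append_right (by omega), Nat.add_sub_cancel_left,
      List.getElem?_append_left (by rwa [length_wpow]), getElem?_wpow hr]
  rw [Nat.succ_mul] at hblock
  have h₁ := hblock (t - u.length) (by omega)
  have h₂ := hblock (t - u.length + b.length) (by omega)
  rw [Nat.add_sub_cancel' ht₁] at h₁
  rw [← Nat.add_assoc, Nat.add_sub_cancel' ht₁, Nat.add_mod_right] at h₂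
  rw [h₁, h₂]

lemma periodDefects_append_wpow_append (u b v : List V) (k : ℕ) :
    periodDefects b.length (u ++ wpow b k ++ b ++ v) =
      (periodDefects b.length (u ++ b ++ v)).image (shiftAbove u.length (k * b.length)) := by
  ext e
  simp only [mem_periodDefects, Finset.mem_image]
  constructor
  · rintro (rfl | ⟨t, ht, rfl⟩)
    · exact ⟨0, Or.inl rfl, by simp [shiftAbove]⟩
    rcases lt_or_ge t u.length with htu | htu
    · refine ⟨t + 1, Or.inr ⟨t, ?_, rfl⟩, by simp only [shiftAbove]; split_ifs <;> omega⟩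
      rwa [getElem?_append_wpow_append_of_lt (by omega),
        getElem?_append_wpow_append_of_lt (by omega)] at ht
    rcases lt_or_ge t (u.length + k * b.length) with htk | htk
    · exact absurd (getElem?_append_wpow_append_periodic htu htk) ht
    obtain ⟨i, rfl⟩ : ∃ i, t = i + k * b.length := ⟨t - k * b.length, by omega⟩
    refine ⟨i + 1, Or.inr ⟨i, ?_, rfl⟩, by simp only [shiftAbove]; split_ifs <;> omega⟩
    rwa [getElem?_append_wpow_append_add (by omega), Nat.add_right_comm,
      getElem?_append_wpow_append_add (by omega)] at ht
  · rintro ⟨d, rfl | ⟨t, ht, rfl⟩, rfl⟩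
    · exact Or.inl (by simp [shiftAbove])
    refine Or.inr ?_
    rcases lt_or_ge t u.length with htu | htu
    · refine ⟨t, ?_, by simp only [shiftAbove]; split_ifs <;> omega⟩
      rwa [getElem?_append_wpow_append_of_lt (by omega),
        getElem?_append_wpow_append_of_lt (by omega)]
    · refine ⟨t + k * b.length, ?_, by simp only [shiftAbove]; split_ifs <;> omega⟩
      rwa [getElem?_append_wpow_append_add htu, Nat.add_right_comm,
        getElem?_append_wpow_append_add (by omega)]
end

def closePairs (s : ℕ) (D : Finset ℕ) : Finset (ℕ × ℕ) :=
  (D ×ˢ D).filter fun q => q.1 < q.2 ∧ q.2 < q.1 + s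

/-- Shifting everything above `p` by `s` keeps close pairs on one side of `p` and separates
every close pair straddling `p`. -/
lemma card_closePairs_image_shiftAbove_lt {D : Finset ℕ} {p s dL dR : ℕ} (hL : dL ∈ D)
    (hR : dR ∈ D) (hLp : dL ≤ p) (hpR : p < dR) (hclose : dR < dL + s) :
    (closePairs s (D.image (shiftAbove p s))).card < (closePairs s D).card := by
  have hstraddle : (dL, dR) ∈ closePairs s D :=
    Finset.mem_filter.2 ⟨Finset.mem_product.2 ⟨hL, hR⟩, by omega, hclose⟩
  have hsub : closePairs s (D.image (shiftAbove p s)) ⊆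
      ((closePairs s D).erase (dL, dR)).image (Prod.map (shiftAbove p s) (shiftAbove p s)) := by
    rintro ⟨e₁, e₂⟩ he
    simp only [closePairs, Finset.mem_filter, Finset.mem_product, Finset.mem_image] at he
    obtain ⟨⟨⟨d₁, hd₁, rfl⟩, ⟨d₂, hd₂, rfl⟩⟩, hlt, hle⟩ := he
    refine Finset.mem_image.2 ⟨(d₁, d₂), Finset.mem_erase.2 ⟨?_, ?_⟩, rfl⟩
    · simp only [ne_eq, Prod.mk.injEq]
      rintro ⟨rfl, rfl⟩
      simp only [shiftAbove] at hle
      split_ifs at hle <;> omega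
    · refine Finset.mem_filter.2 ⟨Finset.mem_product.2 ⟨hd₁, hd₂⟩, ?_⟩
      simp only [shiftAbove] at hlt hle
      split_ifs at hlt hle <;> omega
  calc (closePairs s (D.image (shiftAbove p s))).card
      ≤ ((closePairs s D).erase (dL, dR)).card :=
        (Finset.card_le_card hsub).trans Finset.card_image_le
    _ < (closePairs s D).card := Finset.card_erase_lt_of_mem hstraddle

theorem PumpStep.card_closePairs_lt {V : Type*} {a b c : List V} {j : ℕ} {w w' : List V}
    (h : PumpStep a b c j w w') :
    (closePairs ((j - 1) * b.length) (periodDefects b.length w')).card <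
      (closePairs ((j - 1) * b.length) (periodDefects b.length w)).card := by
  obtain ⟨x, y, hw, hprefix, hsuffix, hw'⟩ := h
  obtain ⟨m, hm⟩ : ∃ m, j / 2 = m + 1 :=
    Nat.exists_eq_succ_of_ne_zero fun h0 => hprefix ⟨b ++ c ++ y, by simp [hw, h0, wpow]⟩
  have hw : w = x ++ a ++ b ++ (c ++ y) := by simp only [hw, List.append_assoc]
  have hw' : w' = x ++ a ++ wpow b (j - 1) ++ b ++ (c ++ y) := by
    rw [hw', List.append_assoc _ (wpow b (j - 1)) b, ← wpow_succ', Nat.sub_add_cancel (by omega)]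
    simp only [List.append_assoc]
  obtain ⟨dR, hdR, hpR, hRle⟩ := exists_periodDefect_of_not_wpow_prefix (m := m) (by
    rw [← hw, ← hm]; simpa only [List.append_assoc] using hprefix)
  obtain ⟨dL, hdL, hLp, hLle⟩ := exists_periodDefect_of_not_wpow_suffix (m := m) (by
    rw [← hw, ← hm]; simpa only [List.append_assoc] using hsuffix)
  have hspan : m * b.length + m * b.length ≤ (j - 1) * b.length := by
    rw [← Nat.add_mul]; exact Nat.mul_le_mul_right _ (by omega)
  rw [hw, hw', periodDefects_append_wpow_append]
  exact card_closePairs_image_shiftAbove_lt hdL hdR hLp hpR (by omega)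

theorem stmt19_general {V : Type*} (a b c z : List V) (j : ℕ) :
    ∀ f : ℕ → List V, f 0 = z → ¬ (∀ n : ℕ, PumpStep a b c j (f n) (f (n + 1))) := by
  intro f _ hsteps
  exact not_strictAnti_of_wellFoundedLT
      (fun n => (closePairs ((j - 1) * b.length) (periodDefects b.length (f n))).card)
      (strictAnti_nat_of_succ_lt fun n => (hsteps n).card_closePairs_lt)

/-- the pumping algorithm terminates. -/
theorem stmt19 {V : Type*} (a b c z : List V) (hb : b ≠ []) (j : ℕ)
    (hj : z.length + (a ++ b ++ c).length < j) (hje : Even j) :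
    ∀ f : ℕ → List V, f 0 = z → ¬ (∀ n : ℕ, PumpStep a b c j (f n) (f (n + 1))) :=
  stmt19_general a b c z j
end
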